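/- arXiv:1905.12664 — 3 statements merged into one kernel-verified Lean document; each statement's English description precedes it below -/
import Mathlib

section
/- Let M be a nonzero ℕⁿ-graded squarefree module over R = K[x₁,…,xₙ]. If the degree-0 component M₀ = 0, then depth M > 0; equivalently, the maximal ideal 𝔪 = (x₁,…,xₙ) is not an associated prime of M. -/
open MvPolynomial

variable (K : Type) [Field K] (n : ℕ)

/-- The graded maximal ideal `𝔪 = (x₁, …, xₙ)` of `R = K[x₁,…,xₙ]`. -/
noncomputable def maxIdeal : Ideal (MvPolynomial (Fin n) K) :=
  Ideal.span (Set.range (MvPolynomial.X : Fin n → MvPolynomial (Fin n) K))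

variable {M : Type} [AddCommGroup M] [Module (MvPolynomial (Fin n) K) M]
  [Module K M] [IsScalarTower K (MvPolynomial (Fin n) K) M]

/-- `ℳ` is an `ℕⁿ`-grading of the `R = K[x₁,…,xₙ]`-module `M`:
`M = ⊕_α ℳ α` and multiplication by `xⱼ` maps `ℳ α` into `ℳ (α + eⱼ)`. -/
def IsNnGrading (ℳ : (Fin n → ℕ) → Submodule K M) : Prop :=
  DirectSum.IsInternal ℳ ∧
    ∀ (α : Fin n → ℕ) (j : Fin n), ∀ x ∈ ℳ α,
      (MvPolynomial.X j : MvPolynomial (Fin n) K) • x ∈ ℳ (α + Pi.single j 1)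

/-- The grading `ℳ` of `M` is squarefree: whenever `αⱼ ≠ 0`, multiplication by `xⱼ`
is bijective from `ℳ α` onto `ℳ (α + eⱼ)`. -/
def IsSquarefreeGrading (ℳ : (Fin n → ℕ) → Submodule K M) : Prop :=
  ∀ (α : Fin n → ℕ) (j : Fin n), α j ≠ 0 →
    (∀ x ∈ ℳ α, (MvPolynomial.X j : MvPolynomial (Fin n) K) • x = 0 → x = 0) ∧
    (∀ y ∈ ℳ (α + Pi.single j 1), ∃ x ∈ ℳ α,
      (MvPolynomial.X j : MvPolynomial (Fin n) K) • x = y)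
/-!
If `𝔪` were associated to `M`, some `x ≠ 0` would be killed by every `xⱼ`. Multiplication by
`xⱼ` shifts degrees injectively, so it also kills every homogeneous component `x_α`. For
`α ≠ 0` pick `j` with `αⱼ ≠ 0`: squarefreeness makes `xⱼ` injective on `M_α`, so `x_α = 0`;
and `x₀ ∈ M₀ = 0`.
-/

namespace DirectSum

variable {ι κ M N σ τ : Type*} [DecidableEq ι] [DecidableEq κ] [AddCommMonoid M] [AddCommMonoid N]
  [SetLike σ M] [AddSubmonoidClass σ M] [SetLike τ N] [AddSubmonoidClass τ N]
  (ℳ : ι → σ) (𝒩 : κ → τ) [Decomposition ℳ] [Decomposition 𝒩]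

theorem decompose_map_apply_of_mapsTo (f : M →+ N) {g : ι → κ} (hg : Function.Injective g)
    (hf : ∀ i, ∀ m ∈ ℳ i, f m ∈ 𝒩 (g i)) (m : M) (i : ι) :
    (decompose 𝒩 (f m) (g i) : N) = f (decompose ℳ m i) := by
  induction m using Decomposition.inductionOn ℳ with
  | zero => simp
  | @homogeneous k m =>
    rcases eq_or_ne k i with rfl | hki
    · rw [decompose_of_mem_same 𝒩 (hf k m m.2), decompose_coe, of_eq_same]
    · rw [decompose_of_mem_ne 𝒩 (hf k m m.2) (hg.ne hki), decompose_coe,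
        of_eq_of_ne _ _ _ hki.symm, ZeroMemClass.coe_zero, map_zero]
  | add m m' hm hm' => simp only [map_add, decompose_add, add_apply, AddMemClass.coe_add, hm, hm']

end DirectSum

theorem IsAssociatedPrime.exists_ne_zero_forall_smul_eq_zero {R M : Type*} [CommSemiring R]
    [IsNoetherianRing R] [AddCommMonoid M] [Module R M] {I : Ideal R}
    (h : IsAssociatedPrime I M) : ∃ x : M, x ≠ 0 ∧ ∀ r ∈ I, r • x = 0 := by
  obtain ⟨hI, x, rfl⟩ := isAssociatedPrime_iff.mp h
  refine ⟨x, ?_, fun r hr => by simpa [Submodule.mem_colon_singleton] using hr⟩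
  rintro rfl
  exact hI.ne_top ((Submodule.colon_eq_top_iff_subset _).mpr (by simp))

theorem X_mem_maxIdeal (j : Fin n) : (X j : MvPolynomial (Fin n) K) ∈ maxIdeal K n :=
  Ideal.subset_span ⟨j, rfl⟩

omit [IsScalarTower K (MvPolynomial (Fin n) K) M] in
theorem eq_zero_of_forall_X_smul_eq_zero (ℳ : (Fin n → ℕ) → Submodule K M)
    (hgr : IsNnGrading K n ℳ) (hsq : IsSquarefreeGrading K n ℳ) (h0 : ℳ 0 = ⊥)
    {x : M} (hx : ∀ j : Fin n, (X j : MvPolynomial (Fin n) K) • x = 0) : x = 0 := by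
  classical
  let _ : DirectSum.Decomposition ℳ := hgr.1.chooseDecomposition
  have hcomponent (α : Fin n → ℕ) : (DirectSum.decompose ℳ x α : M) = 0 := by
    rcases eq_or_ne α 0 with rfl | hα
    · simpa [h0] using (DirectSum.decompose ℳ x 0).2
    obtain ⟨j, hj⟩ : ∃ j, α j ≠ 0 := Function.ne_iff.mp hα
    refine (hsq α j hj).1 _ (DirectSum.decompose ℳ x α).2 ?_
    have hshift := DirectSum.decompose_map_apply_of_mapsTo ℳ ℳ
      (DistribSMul.toAddMonoidHom M (X j : MvPolynomial (Fin n) K))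
      (add_left_injective _) (hgr.2 · j) x α
    simpa [hx j] using hshift.symm
  rw [← DirectSum.sum_support_decompose ℳ x]
  exact Finset.sum_eq_zero fun α _ => hcomponent α

theorem squarefree_depth_pos (ℳ : (Fin n → ℕ) → Submodule K M)
    (hgr : IsNnGrading K n ℳ) (hsq : IsSquarefreeGrading K n ℳ) (h0 : ℳ 0 = ⊥) :
    ¬ IsAssociatedPrime (maxIdeal K n) M := by
  intro hass
  obtain ⟨x, hx0, hkill⟩ := hass.exists_ne_zero_forall_smul_eq_zero
  exact hx0 <| eq_zero_of_forall_X_smul_eq_zero K n ℳ hgr hsq h0 fun j =>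
    hkill _ (X_mem_maxIdeal K n j)
end

section
/- Let A be a Noetherian ring of dimension d. The dual graph of A is connected if and only if A is connected in codimension 1, i.e. Spec A \ V(𝔞) is connected for every ideal 𝔞 with dim A/𝔞 < d − 1. -/
/-- The dual graph (Hochster–Huneke graph) of a commutative ring `A`: vertices are the
minimal primes of `A`, and `{𝔭, 𝔮}` is an edge iff `dim A/(𝔭+𝔮) = dim A − 1`. -/
noncomputable def dualGraph (A : Type) [CommRing A] :
    SimpleGraph {p : Ideal A // p ∈ minimalPrimes A} where
  Adj p q := p ≠ q ∧ ringKrullDim (A ⧸ (p.1 ⊔ q.1)) + 1 = ringKrullDim A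
  symm := by
    constructor
    intro p q h
    exact ⟨h.1.symm, by rw [sup_comm]; exact h.2⟩
  loopless := by constructor; intro p h; exact h.1 rfl

/-- The combinatorial dual graph of a simplicial complex `Δ` (with top dimension `d−1`):
vertices are the facets with `d` vertices, and `{F, G}` is an edge iff
`F ∩ G` has `d−1` vertices (i.e. `dim (F ∩ G) = d−2`). -/
def facetDualGraph {n : ℕ} (Δ : Finset (Finset (Fin n))) (d : ℕ) :
    SimpleGraph {F : Finset (Fin n) // F ∈ Δ ∧ F.card = d} where
  Adj F G := F ≠ G ∧ (F.1 ∩ G.1).card + 1 = d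
  symm := by
    constructor
    intro F G h
    exact ⟨h.1.symm, by rw [Finset.inter_comm]; exact h.2⟩
  loopless := by constructor; intro F h; exact h.1 rfl

/-!
The irreducible components of `Spec A` are the `V(𝔭)`, `𝔭` minimal, and `dim A/𝔞` is the
supremum of the coheights of the primes containing `𝔞`.

If the dual graph is connected, every minimal prime `𝔭` has `dim A/𝔭 ≥ d - 1`, so `𝔭` lies outside
`V(𝔞)` and `V(𝔭) ∖ V(𝔞)`, squeezed between `{𝔭}` and its closure, is connected. For an edge
`{𝔭, 𝔮}`, `dim A/(𝔭 + 𝔮) = d - 1 > dim A/𝔞` forces `V(𝔭 + 𝔮) ⊄ V(𝔞)`, so adjacent pieces meet,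
and the pieces glue along the graph.

Conversely, if a set `S` of minimal primes is closed under adjacency, the closed sets `Z_S` and
`Z_{Sᶜ}` (unions of the corresponding components) cover `Spec A`, and their intersection is the
union of the `V(𝔭 + 𝔮)`, `𝔭 ∈ S`, `𝔮 ∉ S`. These are non-edges, so `dim A/(𝔭 + 𝔮) + 1 < d`, and
removing this intersection from `Spec A` separates `Z_S` from `Z_{Sᶜ}`.
-/

namespace Order

variable {α : Type*} [Preorder α]

lemma coheight_le_krullDim_of_isUpperSet {s : Set α} (hs : IsUpperSet s) {x : α} (hx : x ∈ s) :
    (coheight x : WithBot ℕ∞) ≤ krullDim s := by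
  rw [← show coheight (⟨x, hx⟩ : s) = coheight x from coheight_eq_of_strictMono Subtype.val
    (fun _ _ h => h) (fun a b hab => ⟨⟨b, hs hab.le a.2⟩, hab, rfl⟩) _]
  exact coheight_le_krullDim _

lemma krullDim_le_iSup_krullDim_of_subset_iUnion {ι : Type*} {s : Set α} {t : ι → Set α}
    (ht : ∀ i, IsUpperSet (t i)) (h : s ⊆ ⋃ i, t i) :
    krullDim s ≤ ⨆ i, krullDim (t i) := by
  rw [krullDim_eq_iSup_coheight]
  refine iSup_le fun x => ?_
  obtain ⟨i, hi⟩ := Set.mem_iUnion.mp (h x.2)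
  calc (coheight x : WithBot ℕ∞)
      ≤ coheight (x : α) := by
        exact_mod_cast coheight_le_coheight_apply_of_strictMono Subtype.val (fun _ _ h => h) x
    _ ≤ krullDim (t i) := coheight_le_krullDim_of_isUpperSet (ht i) hi
    _ ≤ ⨆ i, krullDim (t i) := le_iSup (fun i => krullDim (t i)) i

lemma krullDim_add_one_le_coheight {s : Set α} {x : α} (hs : s ⊆ Set.Ioi x) :
    krullDim s + 1 ≤ coheight x := by
  rcases isEmpty_or_nonempty s with _ | _
  · simp [krullDim_eq_bot]
  rw [krullDim_eq_iSup_coheight_of_nonempty, ← WithBot.coe_one, ← WithBot.coe_add,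
    WithBot.coe_le_coe, ENat.iSup_add]
  exact iSup_le fun y =>
    (add_le_add_left
      (coheight_le_coheight_apply_of_strictMono Subtype.val (fun _ _ h => h) y) 1).trans
        (coheight_add_one_le (hs y.2))

end Order

section Topology

variable {X : Type*} [TopologicalSpace X]

lemma not_isPreconnected_compl_inter {Z₁ Z₂ : Set X} (h₁ : IsClosed Z₁) (h₂ : IsClosed Z₂)
    (hcover : Z₁ ∪ Z₂ = Set.univ) (hne₁ : (Z₁ \ Z₂).Nonempty) (hne₂ : (Z₂ \ Z₁).Nonempty) :
    ¬ IsPreconnected (Z₁ ∩ Z₂)ᶜ := by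
  intro hconn
  obtain ⟨x, hx₁, hx₂⟩ := hne₁
  obtain ⟨y, hy₂, hy₁⟩ := hne₂
  obtain ⟨z, -, hz₂, hz₁⟩ := hconn Z₂ᶜ Z₁ᶜ h₂.isOpen_compl h₁.isOpen_compl
    (by rw [Set.compl_inter, Set.union_comm]) ⟨x, fun h => hx₂ h.2, hx₂⟩ ⟨y, fun h => hy₁ h.1, hy₁⟩
  exact (hcover.symm ▸ Set.mem_univ z : z ∈ Z₁ ∪ Z₂).elim hz₁ hz₂

lemma SimpleGraph.Connected.isConnected_iUnion {ι : Type*} {G : SimpleGraph ι} (hG : G.Connected)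
    {s : ι → Set X} (hs : ∀ i, IsConnected (s i))
    (hadj : ∀ i j, G.Adj i j → (s i ∩ s j).Nonempty) :
    IsConnected (⋃ i, s i) :=
  have := hG.nonempty
  IsConnected.iUnion_of_reflTransGen hs fun i j => Relation.ReflTransGen.mono hadj _ _
    ((SimpleGraph.reachable_iff_reflTransGen i j).mp (hG.preconnected i j))

end Topology

open Order

namespace PrimeSpectrum

variable {A : Type*} [CommRing A]

lemma isUpperSet_zeroLocus (s : Set A) : IsUpperSet (zeroLocus s) :=
  fun _ _ hxy hx => (mem_zeroLocus _ _).mpr (((mem_zeroLocus _ _).mp hx).trans hxy)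

lemma ringKrullDim_quotient_le_iSup {ι : Type*} {J : Ideal A} {I : ι → Ideal A}
    (h : zeroLocus (J : Set A) ⊆ ⋃ i, zeroLocus (I i : Set A)) :
    ringKrullDim (A ⧸ J) ≤ ⨆ i, ringKrullDim (A ⧸ I i) := by
  simp_rw [ringKrullDim_quotient]
  exact krullDim_le_iSup_krullDim_of_subset_iUnion (fun i => isUpperSet_zeroLocus _) h

lemma ringKrullDim_quotient_mono {I J : Ideal A}
    (h : zeroLocus (J : Set A) ⊆ zeroLocus (I : Set A)) :
    ringKrullDim (A ⧸ J) ≤ ringKrullDim (A ⧸ I) := by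
  simp_rw [ringKrullDim_quotient]
  exact krullDim_le_of_strictMono (Set.inclusion h) fun _ _ h => h

lemma ringKrullDim_quotient_eq_of_zeroLocus_eq_univ {I : Ideal A}
    (h : zeroLocus (I : Set A) = Set.univ) : ringKrullDim (A ⧸ I) = ringKrullDim A := by
  refine le_antisymm (ringKrullDim_quotient_le I) ?_
  rw [ringKrullDim_quotient, h]
  exact krullDim_le_of_strictMono (fun x => ⟨x, Set.mem_univ x⟩) fun _ _ h => h

lemma ringKrullDim_quotient_add_one_le {p : PrimeSpectrum A} {I : Ideal A}
    (hpI : p.asIdeal ≤ I) (hIp : ¬ I ≤ p.asIdeal) :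
    ringKrullDim (A ⧸ I) + 1 ≤ ringKrullDim (A ⧸ p.asIdeal) := by
  rw [ringKrullDim_quotient, ringKrullDim_quotient]
  calc krullDim (zeroLocus (I : Set A)) + 1 ≤ coheight p :=
        krullDim_add_one_le_coheight fun P hP =>
          lt_of_le_of_ne (hpI.trans hP) fun h => hIp (h ▸ hP)
    _ ≤ krullDim (zeroLocus (p.asIdeal : Set A)) :=
        coheight_le_krullDim_of_isUpperSet (isUpperSet_zeroLocus _) Set.Subset.rfl

end PrimeSpectrum

namespace dualGraph

open PrimeSpectrum

variable {A : Type} [CommRing A]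

lemma eq_of_le {p q : {p : Ideal A // p ∈ minimalPrimes A}} (h : p.1 ≤ q.1) : p = q :=
  Subtype.ext (Minimal.eq_of_le (P := fun r : Ideal A => r.IsPrime ∧ ⊥ ≤ r) q.2 p.2.1 h)

lemma exists_le (x : PrimeSpectrum A) :
    ∃ p : {p : Ideal A // p ∈ minimalPrimes A}, p.1 ≤ x.asIdeal :=
  let ⟨p, hp, hpx⟩ := Ideal.exists_minimalPrimes_le (J := x.asIdeal) bot_le
  ⟨⟨p, hp⟩, hpx⟩

lemma iUnion_zeroLocus :
    ⋃ p : {p : Ideal A // p ∈ minimalPrimes A}, zeroLocus (p.1 : Set A) = Set.univ :=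
  Set.iUnion_eq_univ_iff.mpr exists_le

lemma ringKrullDim_le_quotient_add_one (hG : (dualGraph A).Connected)
    (p : {p : Ideal A // p ∈ minimalPrimes A}) :
    ringKrullDim A ≤ ringKrullDim (A ⧸ p.1) + 1 := by
  by_cases hadj : ∃ q, (dualGraph A).Adj p q
  · obtain ⟨q, -, hpq⟩ := hadj
    rw [← hpq]
    exact add_le_add_left (ringKrullDim_quotient_mono (zeroLocus_anti_mono_ideal le_sup_left)) 1
  · have hp : ∀ q, q = p := fun q => by
      obtain ⟨w⟩ := hG.preconnected p q
      cases w with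
      | nil => rfl
      | cons h _ => exact absurd ⟨_, h⟩ hadj
    have hV : zeroLocus (p.1 : Set A) = Set.univ := Set.eq_univ_of_forall fun x => by
      obtain ⟨q, hqx⟩ := exists_le x
      exact (mem_zeroLocus _ _).mpr (hp q ▸ hqx)
    rw [ringKrullDim_quotient_eq_of_zeroLocus_eq_univ hV]
    exact le_add_of_nonneg_right zero_le_one

lemma ringKrullDim_quotient_sup_add_one_lt {p q : {p : Ideal A // p ∈ minimalPrimes A}}
    (hpq : p ≠ q) (hadj : ¬ (dualGraph A).Adj p q) :
    ringKrullDim (A ⧸ (p.1 ⊔ q.1)) + 1 < ringKrullDim A :=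
  lt_of_le_of_ne
    ((ringKrullDim_quotient_add_one_le (p := ⟨p.1, p.2.1.1⟩) le_sup_left
      fun h => hpq (eq_of_le (le_sup_right.trans h)).symm).trans (ringKrullDim_quotient_le _))
    fun h => hadj ⟨hpq, h⟩

theorem isConnected_compl_zeroLocus (hG : (dualGraph A).Connected) {𝔞 : Ideal A}
    (h𝔞 : ringKrullDim (A ⧸ 𝔞) + 1 < ringKrullDim A) :
    IsConnected (zeroLocus (𝔞 : Set A))ᶜ := by
  set U := (zeroLocus (𝔞 : Set A))ᶜ
  have hU : U = ⋃ p : {p : Ideal A // p ∈ minimalPrimes A}, zeroLocus (p.1 : Set A) ∩ U := by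
    rw [← Set.iUnion_inter, iUnion_zeroLocus, Set.univ_inter]
  rw [hU]
  refine hG.isConnected_iUnion (fun p => ?_) fun p q hpq => ?_
  · have hpU : (⟨p.1, p.2.1.1⟩ : PrimeSpectrum A) ∈ U := fun h𝔞p => h𝔞.not_ge <|
      (ringKrullDim_le_quotient_add_one hG p).trans <|
        add_le_add_left (ringKrullDim_quotient_mono (zeroLocus_anti_mono_ideal h𝔞p)) 1
    refine isConnected_singleton.subset_closure (Set.singleton_subset_iff.mpr ⟨?_, hpU⟩) ?_
    · exact (mem_zeroLocus _ _).mpr Set.Subset.rfl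
    · rw [PrimeSpectrum.closure_singleton]
      exact Set.inter_subset_left
  · obtain ⟨x, hx, hxU⟩ := Set.not_subset.mp fun h => h𝔞.not_ge <|
      hpq.2 ▸ add_le_add_left (ringKrullDim_quotient_mono h) 1
    rw [zeroLocus_sup] at hx
    exact ⟨x, ⟨hx.1, hxU⟩, hx.2, hxU⟩

/-- The set `Z_S`, the union of the irreducible components `V(𝔭)`, `𝔭 ∈ S`. -/
def locus (S : Set {p : Ideal A // p ∈ minimalPrimes A}) : Set (PrimeSpectrum A) :=
  ⋃ p ∈ S, zeroLocus (p.1 : Set A)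

lemma isClosed_locus [IsNoetherianRing A] (S : Set {p : Ideal A // p ∈ minimalPrimes A}) :
    IsClosed (locus S) :=
  have := (minimalPrimes.finite_of_isNoetherianRing A).to_subtype
  S.toFinite.isClosed_biUnion fun _ _ => isClosed_zeroLocus _

lemma locus_union_locus_compl (S : Set {p : Ideal A // p ∈ minimalPrimes A}) :
    locus S ∪ locus Sᶜ = Set.univ := by
  rw [locus, locus, ← Set.biUnion_union, Set.union_compl_self, Set.biUnion_univ,
    iUnion_zeroLocus]

lemma mem_locus_iff {S : Set {p : Ideal A // p ∈ minimalPrimes A}}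
    (p : {p : Ideal A // p ∈ minimalPrimes A}) : ⟨p.1, p.2.1.1⟩ ∈ locus S ↔ p ∈ S := by
  simp only [locus, Set.mem_iUnion, mem_zeroLocus, SetLike.coe_subset_coe, exists_prop]
  exact ⟨fun ⟨q, hq, hqp⟩ => eq_of_le hqp ▸ hq, fun hp => ⟨p, hp, le_rfl⟩⟩

lemma ringKrullDim_quotient_add_one_lt [IsNoetherianRing A]
    {S : Set {p : Ideal A // p ∈ minimalPrimes A}}
    (hS : ∀ p q, (dualGraph A).Adj p q → p ∈ S → q ∈ S)
    {p q : {p : Ideal A // p ∈ minimalPrimes A}} (hp : p ∈ S) (hq : q ∉ S) {𝔞 : Ideal A}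
    (h𝔞 : zeroLocus (𝔞 : Set A) ⊆ locus S ∩ locus Sᶜ) :
    ringKrullDim (A ⧸ 𝔞) + 1 < ringKrullDim A := by
  have := (minimalPrimes.finite_of_isNoetherianRing A).to_subtype
  have : Nonempty (S × ↥Sᶜ) := ⟨(⟨p, hp⟩, ⟨q, hq⟩)⟩
  have hcover : zeroLocus (𝔞 : Set A) ⊆
      ⋃ rs : S × ↥Sᶜ, zeroLocus ((rs.1.1.1 ⊔ rs.2.1.1 : Ideal A) : Set A) := by
    intro x hx
    obtain ⟨r, hr, hxr⟩ := Set.mem_iUnion₂.mp (h𝔞 hx).1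
    obtain ⟨s, hs, hxs⟩ := Set.mem_iUnion₂.mp (h𝔞 hx).2
    exact Set.mem_iUnion.mpr ⟨(⟨r, hr⟩, ⟨s, hs⟩), by rw [zeroLocus_sup]; exact ⟨hxr, hxs⟩⟩
  obtain ⟨⟨r, s⟩, hrs⟩ := exists_eq_ciSup_of_finite
    (f := fun rs : S × ↥Sᶜ => ringKrullDim (A ⧸ (rs.1.1.1 ⊔ rs.2.1.1)))
  calc ringKrullDim (A ⧸ 𝔞) + 1 ≤ ringKrullDim (A ⧸ (r.1.1 ⊔ s.1.1)) + 1 :=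
        add_le_add_left ((ringKrullDim_quotient_le_iSup hcover).trans hrs.ge) 1
    _ < ringKrullDim A := ringKrullDim_quotient_sup_add_one_lt (fun h => s.2 (h ▸ r.2))
        fun hadj => s.2 (hS _ _ hadj r.2)

lemma exists_not_isPreconnected_compl_zeroLocus [IsNoetherianRing A]
    {S : Set {p : Ideal A // p ∈ minimalPrimes A}}
    (hS : ∀ p q, (dualGraph A).Adj p q → p ∈ S → q ∈ S)
    {p q : {p : Ideal A // p ∈ minimalPrimes A}} (hp : p ∈ S) (hq : q ∉ S) :
    ∃ 𝔞 : Ideal A, ringKrullDim (A ⧸ 𝔞) + 1 < ringKrullDim A ∧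
      ¬ IsPreconnected (zeroLocus (𝔞 : Set A))ᶜ := by
  have hV : zeroLocus (vanishingIdeal (locus S ∩ locus Sᶜ) : Set A) = locus S ∩ locus Sᶜ := by
    rw [zeroLocus_vanishingIdeal_eq_closure,
      ((isClosed_locus S).inter (isClosed_locus Sᶜ)).closure_eq]
  refine ⟨_, ringKrullDim_quotient_add_one_lt hS hp hq hV.subset, ?_⟩
  rw [hV]
  exact not_isPreconnected_compl_inter (isClosed_locus S) (isClosed_locus Sᶜ)
    (locus_union_locus_compl S) ⟨_, (mem_locus_iff p).mpr hp, fun h => (mem_locus_iff p).mp h hp⟩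
    ⟨_, (mem_locus_iff q).mpr hq, fun h => hq ((mem_locus_iff q).mp h)⟩

theorem connected_of_forall_isPreconnected [IsNoetherianRing A] [Nontrivial A]
    (h : ∀ 𝔞 : Ideal A, ringKrullDim (A ⧸ 𝔞) + 1 < ringKrullDim A →
      IsPreconnected (zeroLocus (𝔞 : Set A))ᶜ) :
    (dualGraph A).Connected := by
  refine (SimpleGraph.connected_iff _).mpr
    ⟨fun p q => ?_, ⟨(exists_le (Classical.arbitrary (PrimeSpectrum A))).choose⟩⟩
  by_contra hpq
  obtain ⟨𝔞, h𝔞, hdisc⟩ := exists_not_isPreconnected_compl_zeroLocus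
    (S := {r | (dualGraph A).Reachable p r}) (fun r s hrs hr => hr.trans hrs.reachable)
    (SimpleGraph.Reachable.refl p) hpq
  exact hdisc (h 𝔞 h𝔞)

end dualGraph

/-- Hartshorne's connectedness criterion: for a Noetherian ring `A` of dimension `d`,
the dual graph of `A` is connected iff `A` is connected in codimension 1, i.e.
`Spec A ∖ V(𝔞)` is connected for every ideal `𝔞` with `dim A/𝔞 < d − 1`. -/
theorem dual_graph_connected_iff_connected_in_codim_one
    (A : Type) [CommRing A] [IsNoetherianRing A] (d : ℕ) (hd : ringKrullDim A = d) :
    (dualGraph A).Connected ↔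
      ∀ 𝔞 : Ideal A, ringKrullDim (A ⧸ 𝔞) + 1 < (d : WithBot (WithTop ℕ)) →
        IsConnected ((PrimeSpectrum.zeroLocus (𝔞 : Set A))ᶜ) := by
  have : Nontrivial A := not_subsingleton_iff_nontrivial.mp fun _ => by
    simp [ringKrullDim_eq_bot_of_subsingleton] at hd
  have hd' : (d : WithBot (WithTop ℕ)) = ringKrullDim A := hd.symm
  exact ⟨fun hG _ h𝔞 => dualGraph.isConnected_compl_zeroLocus hG (h𝔞.trans_eq hd'),
    fun h => dualGraph.connected_of_forall_isPreconnected fun 𝔞 h𝔞 =>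
      (h 𝔞 (h𝔞.trans_eq hd'.symm)).isPreconnected⟩
end

section
/- Let A be a Noetherian local (or graded) ring of dimension d that is not connected in codimension 1. Then there exist ideals H ⊋ (0) and J ⊋ (0) with H ∩ J = (0) and dim A/(H + J) < d − 1. -/
/-!
Take a primary decomposition `0 = q₁ ∩ ⋯ ∩ qₙ` and a disconnection `u, v` of the open set
`U = Spec A ∖ V(𝔞)`. Each `V(qᵢ)` is irreducible, so it meets at most one of `U ∩ u`, `U ∩ v`.
Intersecting the components of each kind gives `H` and `J` with `H ∩ J = 0`; a point of
`U ∩ V(H + J)` would lie on components of both kinds, so `V(H + J) ⊆ V(𝔞)` and the dimension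
bound is inherited from `A/𝔞`.
-/

open PrimeSpectrum

lemma exists_finset_split_of_not_isPreconnected {X ι : Type*} [TopologicalSpace X]
    [DecidableEq ι] {U : Set X} (hU : IsOpen U) (hU' : ¬IsPreconnected U) (s : Finset ι)
    (Z : ι → Set X) (hZ : ∀ i ∈ s, IsPreirreducible (Z i)) (hcover : U ⊆ ⋃ i ∈ s, Z i) :
    ∃ t ⊆ s, (U ∩ ⋃ i ∈ t, Z i).Nonempty ∧ (U ∩ ⋃ i ∈ s \ t, Z i).Nonempty ∧
      U ∩ (⋃ i ∈ t, Z i) ∩ (⋃ i ∈ s \ t, Z i) = ∅ := by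
  classical
  simp only [IsPreconnected, not_forall, exists_prop] at hU'
  obtain ⟨u, v, hu, hv, huv, ⟨x, hxU, hxu⟩, ⟨y, hyU, hyv⟩, hdisj⟩ := hU'
  set t := s.filter fun i ↦ (Z i ∩ (U ∩ u)).Nonempty
  have hsplit_u : U ∩ (⋃ i ∈ t, Z i) ⊆ u := by
    rintro z ⟨hzU, hzZ⟩
    obtain ⟨i, hit, hzi⟩ := Set.mem_iUnion₂.1 hzZ
    obtain ⟨his, hiu⟩ := Finset.mem_filter.1 hit
    by_contra hzu
    have hzv : z ∈ v := (huv hzU).resolve_left hzu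
    obtain ⟨w, -, ⟨hwU, hwu⟩, -, hwv⟩ :=
      hZ i his _ _ (hU.inter hu) (hU.inter hv) hiu ⟨z, hzi, hzU, hzv⟩
    exact hdisj ⟨w, hwU, hwu, hwv⟩
  have hsplit_v : U ∩ (⋃ i ∈ s \ t, Z i) ⊆ v := by
    rintro z ⟨hzU, hzZ⟩
    obtain ⟨i, hist, hzi⟩ := Set.mem_iUnion₂.1 hzZ
    obtain ⟨his, hit⟩ := Finset.mem_sdiff.1 hist
    refine (huv hzU).resolve_left fun hzu ↦ hit ?_
    exact Finset.mem_filter.2 ⟨his, z, hzi, hzU, hzu⟩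
  refine ⟨t, Finset.filter_subset _ _, ?_, ?_, ?_⟩
  · obtain ⟨i, his, hxi⟩ := Set.mem_iUnion₂.1 (hcover hxU)
    exact ⟨x, hxU, Set.mem_iUnion₂.2 ⟨i, Finset.mem_filter.2 ⟨his, x, hxi, hxU, hxu⟩, hxi⟩⟩
  · obtain ⟨i, his, hyi⟩ := Set.mem_iUnion₂.1 (hcover hyU)
    refine ⟨y, hyU, Set.mem_iUnion₂.2 ⟨i, Finset.mem_sdiff.2 ⟨his, fun hit ↦ ?_⟩, hyi⟩⟩
    exact hdisj ⟨y, hyU, hsplit_u ⟨hyU, Set.mem_iUnion₂.2 ⟨i, hit, hyi⟩⟩, hyv⟩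
  · rw [Set.eq_empty_iff_forall_notMem]
    rintro z ⟨⟨hzU, hzt⟩, hzst⟩
    exact hdisj ⟨z, hzU, hsplit_u ⟨hzU, hzt⟩, hsplit_v ⟨hzU, hzst⟩⟩

lemma PrimeSpectrum.zeroLocus_finset_inf {R ι : Type*} [CommRing R] (s : Finset ι)
    (I : ι → Ideal R) : zeroLocus ((s.inf I : Ideal R) : Set R) = ⋃ i ∈ s, zeroLocus (I i) := by
  ext x
  simp only [mem_zeroLocus, SetLike.coe_subset_coe, x.isPrime.inf_le', Set.mem_iUnion, exists_prop]

lemma ringKrullDim_quotient_le_of_zeroLocus_subset {R : Type*} [CommRing R] {I K : Ideal R}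
    (h : zeroLocus (K : Set R) ⊆ zeroLocus I) : ringKrullDim (R ⧸ K) ≤ ringKrullDim (R ⧸ I) := by
  rw [ringKrullDim_quotient, ringKrullDim_quotient]
  exact Order.krullDim_le_of_strictMono (Set.inclusion h) fun _ _ h ↦ h

lemma PrimeSpectrum.exists_inf_eq_bot_of_not_isPreconnected_compl {R : Type*} [CommRing R]
    [IsNoetherianRing R] {Z : Set (PrimeSpectrum R)} (hZ : IsClosed Z)
    (hZ' : ¬IsPreconnected Zᶜ) :
    ∃ H J : Ideal R, ⊥ < H ∧ ⊥ < J ∧ H ⊓ J = ⊥ ∧ zeroLocus ((H ⊔ J : Ideal R) : Set R) ⊆ Z := by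
  classical
  obtain ⟨s, hs_inf, hs_primary⟩ := Submodule.isLasker R R ⊥
  have hzeroLocus_inf (t : Finset (Ideal R)) :
      zeroLocus ((t.inf id : Ideal R) : Set R) = ⋃ q ∈ t, zeroLocus (q : Set R) :=
    zeroLocus_finset_inf t id
  have hcover : Zᶜ ⊆ ⋃ q ∈ s, zeroLocus (q : Set R) := by
    rw [← hzeroLocus_inf, hs_inf, zeroLocus_bot]
    exact Set.subset_univ _
  have hirred {q : Ideal R} (hq : q ∈ s) : IsPreirreducible (zeroLocus (q : Set R)) :=
    ((isIrreducible_zeroLocus_iff q).2 (Ideal.isPrime_radical (hs_primary hq))).isPreirreducible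
  obtain ⟨t, hts, hH, hJ, hHJ⟩ := exists_finset_split_of_not_isPreconnected hZ.isOpen_compl hZ' s
    (fun q ↦ zeroLocus (q : Set R)) (fun _ ↦ hirred) hcover
  simp only [← hzeroLocus_inf] at hH hJ hHJ
  refine ⟨t.inf id, (s \ t).inf id, bot_lt_iff_ne_bot.2 fun h ↦ ?_, bot_lt_iff_ne_bot.2 fun h ↦ ?_,
    ?_, ?_⟩
  · rw [h, zeroLocus_bot, Set.inter_univ] at hHJ
    exact hJ.ne_empty hHJ
  · rw [h, zeroLocus_bot, Set.inter_univ] at hHJ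
    exact hH.ne_empty hHJ
  · rw [← Finset.inf_union, Finset.union_sdiff_of_subset hts, hs_inf]
  · intro x hx
    by_contra hxZ
    rw [zeroLocus_sup] at hx
    exact Set.eq_empty_iff_forall_notMem.1 hHJ x ⟨⟨hxZ, hx.1⟩, hx.2⟩

theorem exists_decomposition_of_not_connected_in_codim_one_general
    (A : Type) [CommRing A] [IsNoetherianRing A]
    (d : ℕ) (hd : ringKrullDim A = d)
    (hdisc : ∃ 𝔞 : Ideal A, ringKrullDim (A ⧸ 𝔞) + 1 < (d : WithBot (WithTop ℕ)) ∧
      ¬ IsConnected ((PrimeSpectrum.zeroLocus (𝔞 : Set A))ᶜ)) :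
    ∃ H J : Ideal A, ⊥ < H ∧ ⊥ < J ∧ H ⊓ J = ⊥ ∧
      ringKrullDim (A ⧸ (H ⊔ J)) + 1 < (d : WithBot (WithTop ℕ)) := by
  obtain ⟨𝔞, hdim, hconn⟩ := hdisc
  have hdim_le {K : Ideal A} (hK : zeroLocus (K : Set A) ⊆ zeroLocus 𝔞) :
      ringKrullDim (A ⧸ K) + 1 < d :=
    (add_le_add_left (ringKrullDim_quotient_le_of_zeroLocus_subset hK) 1).trans_lt hdim
  have hpre : ¬IsPreconnected (zeroLocus (𝔞 : Set A))ᶜ := by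
    refine fun hpre ↦ hconn ⟨Set.nonempty_iff_ne_empty.2 fun hempty ↦ ?_, hpre⟩
    have hbot := hdim_le (K := ⊥) (by simp [Set.compl_empty_iff.1 hempty])
    rw [ringKrullDim_eq_of_ringEquiv (RingEquiv.quotientBot A), hd] at hbot
    norm_cast at hbot
    omega
  obtain ⟨H, J, hH, hJ, hHJ, hsub⟩ :=
    exists_inf_eq_bot_of_not_isPreconnected_compl (isClosed_zeroLocus _) hpre
  exact ⟨H, J, hH, hJ, hHJ, hdim_le hsub⟩

/-- Let `A` be a Noetherian local ring of dimension `d` that is not connected in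
codimension 1.  Then there exist ideals `H ⊋ (0)` and `J ⊋ (0)` with `H ∩ J = (0)` and
`dim A/(H + J) < d − 1`. -/
theorem exists_decomposition_of_not_connected_in_codim_one
    (A : Type) [CommRing A] [IsNoetherianRing A] [IsLocalRing A]
    (d : ℕ) (hd : ringKrullDim A = d)
    (hdisc : ∃ 𝔞 : Ideal A, ringKrullDim (A ⧸ 𝔞) + 1 < (d : WithBot (WithTop ℕ)) ∧
      ¬ IsConnected ((PrimeSpectrum.zeroLocus (𝔞 : Set A))ᶜ)) :
    ∃ H J : Ideal A, ⊥ < H ∧ ⊥ < J ∧ H ⊓ J = ⊥ ∧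
      ringKrullDim (A ⧸ (H ⊔ J)) + 1 < (d : WithBot (WithTop ℕ)) :=
  exists_decomposition_of_not_connected_in_codim_one_general A d hd hdisc
end
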